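/- arXiv:1706.08023 — 4 statements merged into one kernel-verified Lean document; each statement's English description precedes it below -/
import Mathlib

section
/- Let p be a prime, d ≥ 1 an integer, ε ∈ {0,1}^{d-1} a fixed vector, and a = (a_1,...,a_d), b = (b_1,...,b_d) ∈ ℤ_p^d with a_1 ≢ 0 (mod p) and b_1 ≢ 0 (mod p). Then P^{a,ε}_{d,p} = P^{b,ε}_{d,p} if and only if there exists c ∈ {1,...,p-1} such that b_j c^j ≡ a_j (mod p) for all j = 1,...,d. -/
/-- The `i`-th coordinate (for `i = 1,…,d`) of the `j`-th point of the generalized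
`p`-set with parameters `a` and `ε` (and `a'_h = ε_h * a_h`), namely the fractional
part of `(∑_{h=1}^{i-1} a'_h j^h + a_i j^i) / N`. -/
noncomputable def genCoord (N : ℕ) (a ε : ℕ → ℤ) (j i : ℕ) : ℝ :=
  Int.fract ((((∑ h ∈ Finset.Ico 1 i, ε h * a h * (j : ℤ) ^ h) + a i * (j : ℤ) ^ i : ℤ) : ℝ) / (N : ℝ))

/-- The point `x_j^{a,ε} ∈ [0,1)^d` of the generalized `p`-set. -/
noncomputable def genPoint (p d : ℕ) (a ε : ℕ → ℤ) (j : ℕ) : Fin d → ℝ :=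
  fun i => genCoord p a ε j (i.1 + 1)

/-- The generalized `p`-set `P^{a,ε}_{d,p} = {x_j^{a,ε} : j = 0,…,p-1} ⊂ [0,1)^d`. -/
noncomputable def genPset (p d : ℕ) (a ε : ℕ → ℤ) : Set (Fin d → ℝ) :=
  {x | ∃ j < p, x = genPoint p d a ε j}

/-!
Modulo `p`, the `i`-th numerator of `x_j^{a,ε}` is `∑_{h<i} ε_h y_h + y_i` with `y_h = a_h j^h`, a
unit lower-triangular and hence invertible transform of `y`; so `x_j^{a,ε} = x_{j'}^{b,ε}` exactly
when `a_h j^h ≡ b_h j'^h` for all `h`. If `b_h c^h ≡ a_h` with `c` a unit, then `j ↦ c j` maps the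
points of `P^{a,ε}` onto those of `P^{b,ε}`. Conversely, if the sets agree then `x_1^{a,ε} = x_c^{b,ε}`
for some `c < p`, so `a_h ≡ b_h c^h`, and `c ≠ 0` because `a_1 ≢ 0`.
-/

theorem Int.fract_intCast_div_eq_iff {K : Type*} [Field K] [LinearOrder K] [IsStrictOrderedRing K]
    [FloorRing K] {p : ℕ} (hp : p ≠ 0) (m n : ℤ) :
    Int.fract ((m : K) / p) = Int.fract ((n : K) / p) ↔ (m : ZMod p) = n := by
  have hp' : (p : K) ≠ 0 := Nat.cast_ne_zero.mpr hp
  rw [Int.fract_eq_fract, ZMod.intCast_eq_intCast_iff_dvd_sub, ← dvd_neg, neg_sub]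
  refine exists_congr fun z => ?_
  rw [← sub_div, div_eq_iff hp', mul_comm]
  norm_cast

def unitLowerTriangular {R : Type*} [NonUnitalNonAssocSemiring R] (ε y : ℕ → R) (i : ℕ) : R :=
  ∑ h ∈ Finset.Ico 1 i, ε h * y h + y i

theorem unitLowerTriangular_eqOn_iff {R : Type*} [NonUnitalNonAssocSemiring R] [IsLeftCancelAdd R]
    (ε x y : ℕ → R) (d : ℕ) :
    Set.EqOn (unitLowerTriangular ε x) (unitLowerTriangular ε y) (Set.Icc 1 d) ↔
      Set.EqOn x y (Set.Icc 1 d) := by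
  constructor
  · intro h i
    induction i using Nat.strong_induction_on with
    | _ i ih =>
      intro hi
      have hsum : ∑ h ∈ Finset.Ico 1 i, ε h * x h = ∑ h ∈ Finset.Ico 1 i, ε h * y h :=
        Finset.sum_congr rfl fun h hh => by
          obtain ⟨h1, hi'⟩ := Finset.mem_Ico.mp hh
          rw [ih h hi' ⟨h1, hi'.le.trans hi.2⟩]
      have hxy := h hi
      rw [unitLowerTriangular, unitLowerTriangular, hsum] at hxy
      exact add_left_cancel hxy
  · intro h i hi
    unfold unitLowerTriangular
    rw [h hi, Finset.sum_congr rfl fun k hk => ?_]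
    obtain ⟨k1, ki⟩ := Finset.mem_Ico.mp hk
    rw [h ⟨k1, ki.le.trans hi.2⟩]

theorem genPoint_eq_genPoint_iff {p : ℕ} (hp : p ≠ 0) (d : ℕ) (a b ε : ℕ → ℤ) (j j' : ℕ) :
    genPoint p d a ε j = genPoint p d b ε j' ↔
      Set.EqOn (fun i => (a i * j ^ i : ZMod p)) (fun i => (b i * j' ^ i : ZMod p))
        (Set.Icc 1 d) := by
  have hnum (c : ℕ → ℤ) (k i : ℕ) :
      ((∑ h ∈ Finset.Ico 1 i, ε h * c h * (k : ℤ) ^ h + c i * (k : ℤ) ^ i : ℤ) : ZMod p) =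
        unitLowerTriangular (fun h => (ε h : ZMod p)) (fun h => c h * k ^ h) i := by
    push_cast [unitLowerTriangular]
    simp only [mul_assoc]
  rw [← unitLowerTriangular_eqOn_iff (fun h => (ε h : ZMod p)), funext_iff]
  simp only [genPoint, genCoord, Int.fract_intCast_div_eq_iff hp, hnum]
  constructor
  · rintro h i ⟨hi1, hid⟩
    obtain ⟨k, rfl⟩ := Nat.exists_eq_add_of_le' hi1
    exact h ⟨k, hid⟩
  · exact fun h i => h ⟨Nat.le_add_left 1 i, i.2⟩

theorem genPset_subset_of_mul_pow_eqOn {p : ℕ} [NeZero p] (d : ℕ) (a b ε : ℕ → ℤ) (c : ZMod p)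
    (hc : Set.EqOn (fun i => (b i * c ^ i : ZMod p)) (fun i => (a i : ZMod p)) (Set.Icc 1 d)) :
    genPset p d a ε ⊆ genPset p d b ε := by
  rintro _ ⟨j, -, rfl⟩
  refine ⟨(c * j).val, ZMod.val_lt _,
    (genPoint_eq_genPoint_iff (NeZero.ne p) d a b ε _ _).2 fun i hi => ?_⟩
  simp only [ZMod.natCast_val, ZMod.cast_id', id, mul_pow, ← hc hi]
  ring

theorem genPset_eq_of_mul_pow_eqOn {p : ℕ} [NeZero p] (d : ℕ) (a b ε : ℕ → ℤ) (c : (ZMod p)ˣ)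
    (hc : Set.EqOn (fun i => (b i * c ^ i : ZMod p)) (fun i => (a i : ZMod p)) (Set.Icc 1 d)) :
    genPset p d a ε = genPset p d b ε := by
  refine (genPset_subset_of_mul_pow_eqOn d a b ε c hc).antisymm
    (genPset_subset_of_mul_pow_eqOn d b a ε ↑c⁻¹ fun i hi => ?_)
  simp only [← hc hi, mul_assoc, ← mul_pow, Units.mul_inv, one_pow, mul_one]

theorem exists_mul_pow_eqOn_of_genPset_eq {p : ℕ} (hp : 1 < p) (d : ℕ) (a b ε : ℕ → ℤ)
    (h : genPset p d a ε = genPset p d b ε) :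
    ∃ j < p,
      Set.EqOn (fun i => (b i * j ^ i : ZMod p)) (fun i => (a i : ZMod p)) (Set.Icc 1 d) := by
  obtain ⟨j, hj, hpoint⟩ : genPoint p d a ε 1 ∈ genPset p d b ε := h ▸ ⟨1, hp, rfl⟩
  refine ⟨j, hj, fun i hi => ?_⟩
  simpa using ((genPoint_eq_genPoint_iff (by omega) d a b ε 1 j).1 hpoint hi).symm

theorem gen_pset_eq_iff_general (p d : ℕ) (hp : p.Prime) (hd : 1 ≤ d) (ε : ℕ → ℤ) (a b : ℕ → ℤ)
    (ha1 : ¬ ((p : ℤ) ∣ a 1)) :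
    genPset p d a ε = genPset p d b ε ↔
      ∃ c : ℤ, 1 ≤ c ∧ c ≤ (p : ℤ) - 1 ∧
        ∀ j ∈ Finset.Icc 1 d, b j * c ^ j ≡ a j [ZMOD (p : ℤ)] := by
  have : Fact p.Prime := ⟨hp⟩
  simp only [← ZMod.intCast_eq_intCast_iff, Int.cast_mul, Int.cast_pow, Finset.mem_Icc]
  constructor
  · intro h
    obtain ⟨c, hcp, hc⟩ := exists_mul_pow_eqOn_of_genPset_eq hp.one_lt d a b ε h
    have hc0 : c ≠ 0 := by
      rintro rfl
      have ha10 : (a 1 : ZMod p) = 0 := by simpa using (hc ⟨le_rfl, hd⟩).symm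
      exact ha1 ((ZMod.intCast_zmod_eq_zero_iff_dvd _ _).1 ha10)
    exact ⟨c, by omega, by omega, fun i hi => by exact_mod_cast hc hi⟩
  · rintro ⟨c, hc1, hcp, hc⟩
    have hc0 : (c : ZMod p) ≠ 0 := by
      rw [Ne, ZMod.intCast_zmod_eq_zero_iff_dvd]
      exact fun hdvd => (Int.le_of_dvd (by omega) hdvd).not_gt (by omega)
    exact genPset_eq_of_mul_pow_eqOn d a b ε (Units.mk0 _ hc0) hc

/-- For a fixed `ε ∈ {0,1}^{d-1}` and `a, b ∈ ℤ_p^d` with `a₁, b₁ ≢ 0 (mod p)`, the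
generalized `p`-sets coincide, `P^{a,ε}_{d,p} = P^{b,ε}_{d,p}`, if and only if there is
`c ∈ {1,…,p-1}` with `b_j c^j ≡ a_j (mod p)` for all `j = 1,…,d`. -/
theorem gen_pset_eq_iff (p d : ℕ) (hp : p.Prime) (hd : 1 ≤ d) (ε : ℕ → ℤ)
    (hε : ∀ i ∈ Finset.Icc 1 (d - 1), ε i = 0 ∨ ε i = 1) (a b : ℕ → ℤ)
    (ha : ∀ i ∈ Finset.Icc 1 d, 0 ≤ a i ∧ a i ≤ (p : ℤ) - 1)
    (hb : ∀ i ∈ Finset.Icc 1 d, 0 ≤ b i ∧ b i ≤ (p : ℤ) - 1)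
    (ha1 : ¬ ((p : ℤ) ∣ a 1)) (hb1 : ¬ ((p : ℤ) ∣ b 1)) :
    genPset p d a ε = genPset p d b ε ↔
      ∃ c : ℤ, 1 ≤ c ∧ c ≤ (p : ℤ) - 1 ∧
        ∀ j ∈ Finset.Icc 1 d, b j * c ^ j ≡ a j [ZMOD (p : ℤ)] :=
  gen_pset_eq_iff_general p d hp hd ε a b ha1
end

section
/- Let p be a prime, d ≥ 2 an integer, ε', ε'' ∈ {0,1}^{d-1} with ε' ≠ ε'', and a, b ∈ ℤ_p^d. Define Z = {j : 1 ≤ j ≤ d-1, ε'_j ≠ ε''_j and a_j² + b_j² ≠ 0}. If P^{a,ε'}_{d,p} ≠ P^{b,ε''}_{d,p} and Z = ∅, then P^{a,ε'}_{d,p} ∩ P^{b,ε''}_{d,p} = {(0,...,0)}. -/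
def Ssum (a ε : ℕ → ℤ) (j i : ℕ) : ℤ :=
  (∑ h ∈ Finset.Ico 1 i, ε h * a h * (j : ℤ) ^ h) + a i * (j : ℤ) ^ i

lemma genCoord_eq (N : ℕ) (a ε : ℕ → ℤ) (j i : ℕ) :
    genCoord N a ε j i = Int.fract ((Ssum a ε j i : ℝ) / N) := rfl

lemma fract_int_div (p : ℕ) (hp : 0 < p) (m : ℤ) :
    Int.fract ((m : ℝ) / p) = ((m % (p : ℤ) : ℤ) : ℝ) / p := by
  have hp' : (0:ℝ) < p := by exact_mod_cast hp
  have hm : (m : ℝ) = ((m / (p:ℤ) : ℤ) : ℝ) * p + ((m % (p:ℤ) : ℤ) : ℝ) := by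
    have h2 : ((p:ℤ):ℝ) * ((m / (p:ℤ) : ℤ):ℝ) + ((m % (p:ℤ) : ℤ):ℝ) = (m:ℝ) := by
      exact_mod_cast Int.mul_ediv_add_emod m (p:ℤ)
    push_cast
    push_cast at h2
    linear_combination -h2
  rw [hm, add_div, mul_div_cancel_right₀ _ hp'.ne', Int.fract_intCast_add, Int.fract_eq_self.mpr]
  constructor
  · have : (0:ℤ) ≤ m % (p:ℤ) := Int.emod_nonneg m (by exact_mod_cast hp.ne')
    positivity
  · rw [div_lt_one hp']
    exact_mod_cast Int.emod_lt_of_pos m (by exact_mod_cast hp)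

lemma fract_eq_iff_zmod (p : ℕ) (hp : 0 < p) (m n : ℤ) :
    Int.fract ((m : ℝ) / p) = Int.fract ((n : ℝ) / p) ↔ (m : ZMod p) = (n : ZMod p) := by
  rw [fract_int_div p hp, fract_int_div p hp, ZMod.intCast_eq_intCast_iff']
  have hp' : (0:ℝ) < p := by exact_mod_cast hp
  constructor
  · intro h
    field_simp at h
    exact_mod_cast h
  · intro h
    rw [h]

lemma coord_eq_iff (p : ℕ) (hp : 0 < p) (a ε b ε2 : ℕ → ℤ) (j k i : ℕ) :
    genCoord p a ε j i = genCoord p b ε2 k i ↔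
      ((Ssum a ε j i : ℤ) : ZMod p) = ((Ssum b ε2 k i : ℤ) : ZMod p) := by
  rw [genCoord_eq, genCoord_eq, fract_eq_iff_zmod p hp]

lemma Ssum_cast (p : ℕ) (a ε : ℕ → ℤ) (j i : ℕ) :
    ((Ssum a ε j i : ℤ) : ZMod p)
      = (∑ h ∈ Finset.Ico 1 i, (ε h : ZMod p) * (a h : ZMod p) * (j : ZMod p) ^ h)
        + (a i : ZMod p) * (j : ZMod p) ^ i := by
  unfold Ssum
  push_cast
  rfl

lemma genPoint_zero (p d : ℕ) (a ε : ℕ → ℤ) : genPoint p d a ε 0 = 0 := by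
  funext i
  show genCoord p a ε 0 (i.1 + 1) = 0
  rw [genCoord_eq]
  have h0 : Ssum a ε 0 (i.1 + 1) = 0 := by
    unfold Ssum
    rw [Finset.sum_eq_zero, Nat.cast_zero, zero_pow (by omega), mul_zero, add_zero]
    intro h hh
    rw [Nat.cast_zero, zero_pow, mul_zero]
    exact Nat.one_le_iff_ne_zero.mp (Finset.mem_Ico.mp hh).1
  rw [h0]
  norm_num

lemma key_ind (p d : ℕ) (a b ε' ε'' : ℕ → ℤ) (j k : ℕ)
    (hEq : ∀ h ∈ Finset.Icc 1 (d - 1), ε' h = ε'' h ∨ (a h = 0 ∧ b h = 0))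
    (hS : ∀ i ∈ Finset.Icc 1 d, ((Ssum a ε' j i : ℤ) : ZMod p) = ((Ssum b ε'' k i : ℤ) : ZMod p)) :
    ∀ i ∈ Finset.Icc 1 d,
      (a i : ZMod p) * (j : ZMod p) ^ i = (b i : ZMod p) * (k : ZMod p) ^ i := by
  intro i
  induction i using Nat.strong_induction_on with
  | _ i IH =>
    intro hi
    have hSi := hS i hi
    rw [Ssum_cast, Ssum_cast] at hSi
    obtain ⟨hi1, hi2⟩ := Finset.mem_Icc.mp hi
    have hsum : ∑ h ∈ Finset.Ico 1 i, (ε' h : ZMod p) * (a h : ZMod p) * (j : ZMod p) ^ h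
        = ∑ h ∈ Finset.Ico 1 i, (ε'' h : ZMod p) * (b h : ZMod p) * (k : ZMod p) ^ h := by
      refine Finset.sum_congr rfl fun h hh => ?_
      obtain ⟨h1, h2⟩ := Finset.mem_Ico.mp hh
      have hIH := IH h h2 (Finset.mem_Icc.mpr ⟨h1, by omega⟩)
      rcases hEq h (Finset.mem_Icc.mpr ⟨h1, by omega⟩) with he | ⟨ha0, hb0⟩
      · rw [he, mul_assoc, mul_assoc, hIH]
      · rw [ha0, hb0]
        push_cast
        ring
    linear_combination hSi - hsum

lemma genPset_subset (p d : ℕ) [NeZero p] (a b ε' ε'' : ℕ → ℤ)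
    (hEq : ∀ h ∈ Finset.Icc 1 (d - 1), ε' h = ε'' h ∨ (a h = 0 ∧ b h = 0))
    (t : ZMod p)
    (hbi : ∀ i ∈ Finset.Icc 1 d, (b i : ZMod p) = (a i : ZMod p) * t ^ i) :
    genPset p d b ε'' ⊆ genPset p d a ε' := by
  rintro x ⟨m, hm, rfl⟩
  refine ⟨(t * (m : ZMod p)).val, ZMod.val_lt _, ?_⟩
  funext i
  show genCoord p b ε'' m (i.1 + 1) = genCoord p a ε' ((t * (m : ZMod p)).val) (i.1 + 1)
  have hp : 0 < p := Nat.pos_of_ne_zero (NeZero.ne p)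
  rw [coord_eq_iff p hp, Ssum_cast, Ssum_cast]
  have hJ : (((t * (m : ZMod p)).val : ℕ) : ZMod p) = t * (m : ZMod p) := by
    simp [ZMod.natCast_val, ZMod.cast_id]
  rw [hJ]
  have hi2 : i.1 + 1 ≤ d := i.2
  have hlast : (b (i.1 + 1) : ZMod p) * (m : ZMod p) ^ (i.1 + 1)
      = (a (i.1 + 1) : ZMod p) * (t * (m : ZMod p)) ^ (i.1 + 1) := by
    rw [hbi (i.1 + 1) (Finset.mem_Icc.mpr ⟨by omega, hi2⟩), mul_pow]
    ring
  rw [hlast]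
  congr 1
  refine Finset.sum_congr rfl fun h hh => ?_
  obtain ⟨h1, h2⟩ := Finset.mem_Ico.mp hh
  have hbih := hbi h (Finset.mem_Icc.mpr ⟨h1, by omega⟩)
  rcases hEq h (Finset.mem_Icc.mpr ⟨h1, by omega⟩) with he | ⟨ha0, hb0⟩
  · rw [hbih, he, mul_pow]
    ring
  · rw [ha0, hb0]
    push_cast
    ring

/-- For `ε', ε'' ∈ {0,1}^{d-1}` with `ε' ≠ ε''` and `a, b ∈ ℤ_p^d`: if the set
`Z = {j : 1 ≤ j ≤ d-1, ε'_j ≠ ε''_j and a_j² + b_j² ≠ 0}` is empty and the generalized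
`p`-sets `P^{a,ε'}_{d,p}` and `P^{b,ε''}_{d,p}` are different, then they intersect only
in the origin. -/
theorem gen_pset_inter_of_Z_empty (p d : ℕ) (hp : p.Prime) (hd : 2 ≤ d) (ε' ε'' : ℕ → ℤ)
    (hε' : ∀ i ∈ Finset.Icc 1 (d - 1), ε' i = 0 ∨ ε' i = 1)
    (hε'' : ∀ i ∈ Finset.Icc 1 (d - 1), ε'' i = 0 ∨ ε'' i = 1)
    (hεne : ∃ j ∈ Finset.Icc 1 (d - 1), ε' j ≠ ε'' j) (a b : ℕ → ℤ)
    (ha : ∀ i ∈ Finset.Icc 1 d, 0 ≤ a i ∧ a i ≤ (p : ℤ) - 1)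
    (hb : ∀ i ∈ Finset.Icc 1 d, 0 ≤ b i ∧ b i ≤ (p : ℤ) - 1)
    (hZ : ∀ j ∈ Finset.Icc 1 (d - 1), ¬ (ε' j ≠ ε'' j ∧ (a j) ^ 2 + (b j) ^ 2 ≠ 0))
    (hne : genPset p d a ε' ≠ genPset p d b ε'') :
    genPset p d a ε' ∩ genPset p d b ε'' = {0} := by
  haveI : Fact p.Prime := ⟨hp⟩
  haveI : NeZero p := ⟨hp.pos.ne'⟩
  have hp0 : 0 < p := hp.pos
  have hEq : ∀ h ∈ Finset.Icc 1 (d - 1), ε' h = ε'' h ∨ (a h = 0 ∧ b h = 0) := by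
    intro h hh
    by_cases he : ε' h = ε'' h
    · exact Or.inl he
    · right
      have hz := hZ h hh
      have hsq : a h ^ 2 + b h ^ 2 = 0 := by
        by_contra hc
        exact hz ⟨he, hc⟩
      constructor <;> nlinarith [sq_nonneg (a h), sq_nonneg (b h)]
  ext x
  simp only [Set.mem_inter_iff, Set.mem_singleton_iff]
  constructor
  · rintro ⟨⟨j, hj, rfl⟩, ⟨k, hk, hxk⟩⟩
    by_contra hx0
    have hj0 : j ≠ 0 := by
      rintro rfl
      exact hx0 (genPoint_zero p d a ε')
    have hk0 : k ≠ 0 := by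
      rintro rfl
      rw [hxk] at hx0
      exact hx0 (genPoint_zero p d b ε'')
    have hjz : (j : ZMod p) ≠ 0 := by
      rw [Ne, ZMod.natCast_eq_zero_iff]
      intro hdvd
      have := Nat.le_of_dvd (Nat.pos_of_ne_zero hj0) hdvd
      omega
    have hkz : (k : ZMod p) ≠ 0 := by
      rw [Ne, ZMod.natCast_eq_zero_iff]
      intro hdvd
      have := Nat.le_of_dvd (Nat.pos_of_ne_zero hk0) hdvd
      omega
    have hS : ∀ i ∈ Finset.Icc 1 d,
        ((Ssum a ε' j i : ℤ) : ZMod p) = ((Ssum b ε'' k i : ℤ) : ZMod p) := by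
      intro i hi
      obtain ⟨hi1, hi2⟩ := Finset.mem_Icc.mp hi
      have hcoord := congrFun hxk (⟨i - 1, by omega⟩ : Fin d)
      have hidx : i - 1 + 1 = i := by omega
      simp only [genPoint, hidx] at hcoord
      exact (coord_eq_iff p hp0 a ε' b ε'' j k i).mp hcoord
    have hab := key_ind p d a b ε' ε'' j k hEq hS
    set t : ZMod p := (j : ZMod p) * (k : ZMod p)⁻¹ with ht
    have ht0 : t ≠ 0 := mul_ne_zero hjz (inv_ne_zero hkz)
    have htk : t * (k : ZMod p) = (j : ZMod p) := by
      rw [ht, mul_assoc, inv_mul_cancel₀ hkz, mul_one]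
    have hbi : ∀ i ∈ Finset.Icc 1 d, (b i : ZMod p) = (a i : ZMod p) * t ^ i := by
      intro i hi
      have h1 : (b i : ZMod p) * (k : ZMod p) ^ i = (a i : ZMod p) * t ^ i * (k : ZMod p) ^ i := by
        rw [mul_assoc, ← mul_pow, htk]
        exact (hab i hi).symm
      exact mul_right_cancel₀ (pow_ne_zero _ hkz) h1
    have hai : ∀ i ∈ Finset.Icc 1 d, (a i : ZMod p) = (b i : ZMod p) * (t⁻¹) ^ i := by
      intro i hi
      rw [hbi i hi, mul_assoc, ← mul_pow, mul_inv_cancel₀ ht0, one_pow, mul_one]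
    have hEq' : ∀ h ∈ Finset.Icc 1 (d - 1), ε'' h = ε' h ∨ (b h = 0 ∧ a h = 0) :=
      fun h hh => (hEq h hh).imp Eq.symm And.symm
    have hsub1 := genPset_subset p d a b ε' ε'' hEq t hbi
    have hsub2 := genPset_subset p d b a ε'' ε' hEq' t⁻¹ hai
    exact hne (hsub2.antisymm hsub1)
  · rintro rfl
    exact ⟨⟨0, hp0, (genPoint_zero p d a ε').symm⟩, ⟨0, hp0, (genPoint_zero p d b ε'').symm⟩⟩
end

section
/- Let p be a prime, d ≥ 2 an integer, ε', ε'' ∈ {0,1}^{d-1} with ε' ≠ ε'', and a, b ∈ ℤ_p^d. Define Z = {j : 1 ≤ j ≤ d-1, ε'_j ≠ ε''_j and a_j² + b_j² ≠ 0}. If P^{a,ε'}_{d,p} ≠ P^{b,ε''}_{d,p} and Z ≠ ∅, then the intersection P^{a,ε'}_{d,p} ∩ P^{b,ε''}_{d,p} has cardinality at most r + 1, where r = min{j : 1 ≤ j ≤ d, a_j² + b_j² ≠ 0}. -/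
open Polynomial Finset

/-- The numerator of `genCoord p a ε j i` read in `ZMod p`, at `z = j`. -/
def coordZMod (p : ℕ) (a ε : ℕ → ℤ) (i : ℕ) (z : ZMod p) : ZMod p :=
  ∑ h ∈ Ico 1 i, (ε h : ZMod p) * a h * z ^ h + a i * z ^ i

section Coordinates

variable {p d : ℕ} {a b ε₁ ε₂ : ℕ → ℤ}

lemma fract_div_eq_fract_div_iff (hp : p ≠ 0) (x y : ℤ) :
    Int.fract ((x : ℝ) / p) = Int.fract ((y : ℝ) / p) ↔ (x : ZMod p) = y := by
  rw [Int.fract_div_intCast_eq_div_intCast_mod, Int.fract_div_intCast_eq_div_intCast_mod,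
    ZMod.intCast_eq_intCast_iff, div_left_inj' (by exact_mod_cast hp)]
  exact_mod_cast Iff.rfl

lemma genCoord_eq_genCoord_iff (hp : p ≠ 0) (j k i : ℕ) :
    genCoord p a ε₁ j i = genCoord p b ε₂ k i ↔ coordZMod p a ε₁ i j = coordZMod p b ε₂ i k := by
  rw [genCoord, genCoord, fract_div_eq_fract_div_iff hp]
  push_cast
  rfl

lemma genPoint_eq_genPoint_iff_s7 [NeZero p] (J K : ZMod p) :
    genPoint p d a ε₁ J.val = genPoint p d b ε₂ K.val ↔
      ∀ i ∈ Icc 1 d, coordZMod p a ε₁ i J = coordZMod p b ε₂ i K := by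
  simp only [funext_iff, genPoint, genCoord_eq_genCoord_iff (NeZero.ne p), ZMod.natCast_zmod_val]
  constructor
  · intro h i hi
    obtain ⟨hi1, hid⟩ := mem_Icc.mp hi
    simpa [Nat.sub_add_cancel hi1] using h ⟨i - 1, by omega⟩
  · exact fun h i => h (i.1 + 1) (mem_Icc.mpr ⟨by omega, i.2⟩)

lemma exists_of_mem_inter_genPset [NeZero p] {x : Fin d → ℝ}
    (hx : x ∈ genPset p d a ε₁ ∩ genPset p d b ε₂) :
    ∃ J K : ZMod p, x = genPoint p d a ε₁ J.val ∧ x = genPoint p d b ε₂ K.val := by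
  obtain ⟨⟨j, hj, rfl⟩, ⟨k, hk, hxk⟩⟩ := hx
  exact ⟨j, k, by rw [ZMod.val_natCast_of_lt hj], by rw [ZMod.val_natCast_of_lt hk, hxk]⟩

lemma coordZMod_of_forall_eq_zero {n : ℕ} (h : ∀ i ∈ Ico 1 n, (a i : ZMod p) = 0) (z : ZMod p) :
    coordZMod p a ε₁ n z = a n * z ^ n := by
  rw [coordZMod, sum_eq_zero fun i hi => by rw [h i hi, mul_zero, zero_mul], zero_add]

lemma coordZMod_succ {n : ℕ} (hn : 1 ≤ n) (z : ZMod p) :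
    coordZMod p a ε₁ (n + 1) z =
      coordZMod p a ε₁ n z + ((ε₁ n : ZMod p) - 1) * a n * z ^ n + a (n + 1) * z ^ (n + 1) := by
  rw [coordZMod, coordZMod, sum_Ico_succ_top hn]
  ring

end Coordinates

section Counting

variable {p d : ℕ} [Fact p.Prime] {a b ε₁ ε₂ : ℕ → ℤ}

lemma ncard_inter_genPset_le_natDegree {P : (ZMod p)[X]} (hP : P ≠ 0)
    (hroot : ∀ J K : ZMod p, genPoint p d a ε₁ J.val = genPoint p d b ε₂ K.val → P.IsRoot J) :
    (genPset p d a ε₁ ∩ genPset p d b ε₂).ncard ≤ P.natDegree := by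
  classical
  have hsub : genPset p d a ε₁ ∩ genPset p d b ε₂ ⊆
      (fun J : ZMod p => genPoint p d a ε₁ J.val) '' (P.roots.toFinset : Set (ZMod p)) := by
    intro x hx
    obtain ⟨J, K, hxJ, hxK⟩ := exists_of_mem_inter_genPset hx
    exact ⟨J, by simpa [hP] using hroot J K (hxJ.symm.trans hxK), hxJ.symm⟩
  calc (genPset p d a ε₁ ∩ genPset p d b ε₂).ncard
      ≤ (P.roots.toFinset : Set (ZMod p)).ncard :=
        (Set.ncard_le_ncard hsub (Set.toFinite _)).trans (Set.ncard_image_le (Set.toFinite _))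
    _ ≤ P.natDegree := by
        rw [Set.ncard_coe_finset]
        exact (Multiset.toFinset_card_le _).trans P.card_roots'

lemma ncard_inter_genPset_le_one_of_left
    (h : ∀ J K : ZMod p, genPoint p d a ε₁ J.val = genPoint p d b ε₂ K.val → J = 0) :
    (genPset p d a ε₁ ∩ genPset p d b ε₂).ncard ≤ 1 :=
  (ncard_inter_genPset_le_natDegree X_ne_zero fun J K hJK => by
    simpa using h J K hJK).trans natDegree_X_le

lemma ncard_inter_genPset_le_one_of_right
    (h : ∀ J K : ZMod p, genPoint p d a ε₁ J.val = genPoint p d b ε₂ K.val → K = 0) :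
    (genPset p d a ε₁ ∩ genPset p d b ε₂).ncard ≤ 1 := by
  rw [Set.inter_comm]
  exact ncard_inter_genPset_le_one_of_left fun J K hJK => h K J hJK.symm

end Counting

/-- Eliminating `K` from the three relations between the two parameters `J`, `K` of a common
point leaves a polynomial equation of degree `r + 1` in `J`. -/
lemma mul_sub_eq_zero_of_relations {R : Type*} [CommRing R] [IsDomain R] {r m : ℕ}
    {ar br am bm am₁ bm₁ J K : R} (hr : ar * J ^ r = br * K ^ r) (hm : am * J ^ m = bm * K ^ m)
    (hm₁ : am * J ^ m + am₁ * J ^ (m + 1) = bm₁ * K ^ (m + 1)) :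
    J * (br * (bm * am + bm * am₁ * J) ^ r - (bm₁ * am) ^ r * ar * J ^ r) = 0 := by
  rcases eq_or_ne J 0 with rfl | hJ
  · exact zero_mul _
  have hlin : bm * am + bm * am₁ * J = bm₁ * am * K := by
    refine mul_right_cancel₀ (pow_ne_zero m hJ) ?_
    linear_combination bm * hm₁ - bm₁ * K * hm
  rw [hlin]
  linear_combination (-J * (bm₁ * am) ^ r) * hr

section Relations

variable {p d : ℕ} {a b ε₁ ε₂ : ℕ → ℤ} {r m : ℕ}

lemma mul_pow_eq_of_coordZMod_eq {J K : ZMod p} (hr : 1 ≤ r) (hmd : m ≤ d)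
    (hlow : ∀ i ∈ Ico 1 r, (a i : ZMod p) = 0 ∧ (b i : ZMod p) = 0)
    (hmid : ∀ i ∈ Ico r m, ε₁ i = ε₂ i ∨ (a i : ZMod p) = 0 ∧ (b i : ZMod p) = 0)
    (hC : ∀ i ∈ Icc 1 d, coordZMod p a ε₁ i J = coordZMod p b ε₂ i K) :
    ∀ i ∈ Icc r m, (a i : ZMod p) * J ^ i = b i * K ^ i := by
  intro i hi
  obtain ⟨hri, him⟩ := mem_Icc.mp hi
  clear hi
  induction i, hri using Nat.le_induction with
  | base =>
    have h := hC r (mem_Icc.mpr ⟨hr, by omega⟩)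
    rwa [coordZMod_of_forall_eq_zero (fun i hi => (hlow i hi).1),
      coordZMod_of_forall_eq_zero (fun i hi => (hlow i hi).2)] at h
  | succ n hrn ih =>
    have ihn := ih (by omega)
    have hn := hC n (mem_Icc.mpr ⟨by omega, by omega⟩)
    have hn₁ := hC (n + 1) (mem_Icc.mpr ⟨by omega, by omega⟩)
    rw [coordZMod_succ (by omega), coordZMod_succ (by omega)] at hn₁
    rcases hmid n (mem_Ico.mpr ⟨hrn, by omega⟩) with he | ⟨ha, hb⟩
    · rw [he] at hn₁
      linear_combination hn₁ - hn - ((ε₂ n : ZMod p) - 1) * ihn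
    · rw [ha, hb] at hn₁
      linear_combination hn₁ - hn

lemma relations_of_genPoint_eq_genPoint [NeZero p] {J K : ZMod p} (hr : 1 ≤ r) (hrm : r ≤ m)
    (hmd : m < d) (hε₁ : ε₁ m = 1) (hε₂ : ε₂ m = 0)
    (hlow : ∀ i ∈ Ico 1 r, (a i : ZMod p) = 0 ∧ (b i : ZMod p) = 0)
    (hmid : ∀ i ∈ Ico r m, ε₁ i = ε₂ i ∨ (a i : ZMod p) = 0 ∧ (b i : ZMod p) = 0)
    (hJK : genPoint p d a ε₁ J.val = genPoint p d b ε₂ K.val) :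
    (a r : ZMod p) * J ^ r = b r * K ^ r ∧ (a m : ZMod p) * J ^ m = b m * K ^ m ∧
      (a m : ZMod p) * J ^ m + a (m + 1) * J ^ (m + 1) = b (m + 1) * K ^ (m + 1) := by
  have hC := (genPoint_eq_genPoint_iff_s7 J K).mp hJK
  have hchain := mul_pow_eq_of_coordZMod_eq hr hmd.le hlow hmid hC
  have hM := hchain m (mem_Icc.mpr ⟨hrm, le_rfl⟩)
  have hCm := hC m (mem_Icc.mpr ⟨by omega, hmd.le⟩)
  have hCm₁ := hC (m + 1) (mem_Icc.mpr ⟨by omega, hmd⟩)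
  rw [coordZMod_succ (by omega), coordZMod_succ (by omega), hε₁, hε₂] at hCm₁
  push_cast at hCm₁
  exact ⟨hchain r (mem_Icc.mpr ⟨le_rfl, hrm⟩), hM, by linear_combination hCm₁ - hCm + hM⟩

lemma ncard_inter_genPset_le_of_eps_eq_one_zero [Fact p.Prime] (hr : 1 ≤ r) (hrm : r ≤ m)
    (hmd : m < d) (hε₁ : ε₁ m = 1) (hε₂ : ε₂ m = 0)
    (hlow : ∀ i ∈ Ico 1 r, (a i : ZMod p) = 0 ∧ (b i : ZMod p) = 0)
    (hmid : ∀ i ∈ Ico r m, ε₁ i = ε₂ i ∨ (a i : ZMod p) = 0 ∧ (b i : ZMod p) = 0)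
    (hr₀ : ¬((a r : ZMod p) = 0 ∧ (b r : ZMod p) = 0))
    (hm₀ : ¬((a m : ZMod p) = 0 ∧ (b m : ZMod p) = 0)) :
    (genPset p d a ε₁ ∩ genPset p d b ε₂).ncard ≤ r + 1 := by
  have hrel (J K : ZMod p) (hJK : genPoint p d a ε₁ J.val = genPoint p d b ε₂ K.val) :=
    relations_of_genPoint_eq_genPoint hr hrm hmd hε₁ hε₂ hlow hmid hJK
  have hr' : r ≠ 0 := by omega
  have hm' : m ≠ 0 := by omega
  by_cases hgen : (b r : ZMod p) ≠ 0 ∧ (b m : ZMod p) ≠ 0 ∧ (a m : ZMod p) ≠ 0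
  · obtain ⟨hbr, hbm, ham⟩ := hgen
    set Q : (ZMod p)[X] := C (b r : ZMod p) *
        (C ((b m : ZMod p) * a m) + C ((b m : ZMod p) * a (m + 1)) * X) ^ r -
      C (((b (m + 1) : ZMod p) * a m) ^ r * a r) * X ^ r
    have hQ : Q.eval 0 ≠ 0 := by simp [Q, hr', hbr, hbm, ham]
    have hXQ : X * Q ≠ 0 := mul_ne_zero X_ne_zero fun h => hQ (by rw [h, eval_zero])
    have hdeg : (X * Q).natDegree ≤ r + 1 := by
      dsimp only [Q]
      compute_degree
      omega
    refine (ncard_inter_genPset_le_natDegree hXQ fun J K hJK => ?_).trans hdeg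
    obtain ⟨hR, hM, hE⟩ := hrel J K hJK
    simpa [Q] using mul_sub_eq_zero_of_relations hR hM hE
  · rcases (by tauto : (b r : ZMod p) = 0 ∨ (b m : ZMod p) = 0 ∨ (a m : ZMod p) = 0)
      with hbr | hbm | ham
    · have har : (a r : ZMod p) ≠ 0 := fun h => hr₀ ⟨h, hbr⟩
      refine (ncard_inter_genPset_le_one_of_left fun J K hJK => ?_).trans (by omega)
      simpa [hbr, har, hr'] using (hrel J K hJK).1
    · have ham : (a m : ZMod p) ≠ 0 := fun h => hm₀ ⟨h, hbm⟩
      refine (ncard_inter_genPset_le_one_of_left fun J K hJK => ?_).trans (by omega)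
      simpa [hbm, ham, hm'] using (hrel J K hJK).2.1
    · have hbm : (b m : ZMod p) ≠ 0 := fun h => hm₀ ⟨ham, h⟩
      refine (ncard_inter_genPset_le_one_of_right fun J K hJK => ?_).trans (by omega)
      simpa [ham, hbm, hm'] using (hrel J K hJK).2.1.symm

lemma ncard_inter_genPset_le_of_eps_ne [Fact p.Prime] (hr : 1 ≤ r) (hrm : r ≤ m) (hmd : m < d)
    (hε₁ : ε₁ m = 0 ∨ ε₁ m = 1) (hε₂ : ε₂ m = 0 ∨ ε₂ m = 1) (hε : ε₁ m ≠ ε₂ m)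
    (hlow : ∀ i ∈ Ico 1 r, (a i : ZMod p) = 0 ∧ (b i : ZMod p) = 0)
    (hmid : ∀ i ∈ Ico r m, ε₁ i = ε₂ i ∨ (a i : ZMod p) = 0 ∧ (b i : ZMod p) = 0)
    (hr₀ : ¬((a r : ZMod p) = 0 ∧ (b r : ZMod p) = 0))
    (hm₀ : ¬((a m : ZMod p) = 0 ∧ (b m : ZMod p) = 0)) :
    (genPset p d a ε₁ ∩ genPset p d b ε₂).ncard ≤ r + 1 := by
  rcases hε₁ with h₁ | h₁ <;> rcases hε₂ with h₂ | h₂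
  · exact absurd (h₁.trans h₂.symm) hε
  · rw [Set.inter_comm]
    exact ncard_inter_genPset_le_of_eps_eq_one_zero hr hrm hmd h₂ h₁
      (fun i hi => (hlow i hi).symm) (fun i hi => (hmid i hi).imp Eq.symm And.symm)
      (fun h => hr₀ h.symm) (fun h => hm₀ h.symm)
  · exact ncard_inter_genPset_le_of_eps_eq_one_zero hr hrm hmd h₁ h₂ hlow hmid hr₀ hm₀
  · exact absurd (h₁.trans h₂.symm) hε

end Relations

lemma intCast_zmod_eq_zero_iff_of_le {p : ℕ} {x : ℤ} (hx : 0 ≤ x ∧ x ≤ p - 1) :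
    (x : ZMod p) = 0 ↔ x = 0 := by
  refine ⟨fun h => ?_, fun h => by rw [h, Int.cast_zero]⟩
  exact Int.eq_zero_of_dvd_of_nonneg_of_lt hx.1 (by omega)
    ((ZMod.intCast_zmod_eq_zero_iff_dvd x p).mp h)

lemma sq_add_sq_eq_zero_iff_intCast_zmod {p : ℕ} {x y : ℤ} (hx : 0 ≤ x ∧ x ≤ p - 1)
    (hy : 0 ≤ y ∧ y ≤ p - 1) : x ^ 2 + y ^ 2 = 0 ↔ (x : ZMod p) = 0 ∧ (y : ZMod p) = 0 := by
  rw [sq, sq, mul_self_add_mul_self_eq_zero, intCast_zmod_eq_zero_iff_of_le hx,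
    intCast_zmod_eq_zero_iff_of_le hy]

theorem gen_pset_inter_card_of_Z_nonempty_general (p d : ℕ) (hp : p.Prime)
    (ε' ε'' : ℕ → ℤ)
    (hε' : ∀ i ∈ Finset.Icc 1 (d - 1), ε' i = 0 ∨ ε' i = 1)
    (hε'' : ∀ i ∈ Finset.Icc 1 (d - 1), ε'' i = 0 ∨ ε'' i = 1)
    (a b : ℕ → ℤ)
    (ha : ∀ i ∈ Finset.Icc 1 d, 0 ≤ a i ∧ a i ≤ (p : ℤ) - 1)
    (hb : ∀ i ∈ Finset.Icc 1 d, 0 ≤ b i ∧ b i ≤ (p : ℤ) - 1)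
    (hZ : ∃ j ∈ Finset.Icc 1 (d - 1), ε' j ≠ ε'' j ∧ (a j) ^ 2 + (b j) ^ 2 ≠ 0)
    (r : ℕ)
    (hr : r = sInf {j : ℕ | 1 ≤ j ∧ j ≤ d ∧ (a j) ^ 2 + (b j) ^ 2 ≠ 0}) :
    (genPset p d a ε' ∩ genPset p d b ε'').ncard ≤ r + 1 := by
  classical
  have := Fact.mk hp
  have hvan (i : ℕ) (hi1 : 1 ≤ i) (hid : i ≤ d) :
      a i ^ 2 + b i ^ 2 = 0 ↔ (a i : ZMod p) = 0 ∧ (b i : ZMod p) = 0 := by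
    have hi : i ∈ Icc 1 d := mem_Icc.mpr ⟨hi1, hid⟩
    exact sq_add_sq_eq_zero_iff_intCast_zmod (ha i hi) (hb i hi)
  obtain ⟨hmI, hεm, habm⟩ := Nat.find_spec hZ
  set m := Nat.find hZ
  obtain ⟨hm1, hmd⟩ := mem_Icc.mp hmI
  have hmS : m ∈ {j : ℕ | 1 ≤ j ∧ j ≤ d ∧ a j ^ 2 + b j ^ 2 ≠ 0} := ⟨hm1, by omega, habm⟩
  obtain ⟨hr1, hrd, habr⟩ : r ∈ {j : ℕ | 1 ≤ j ∧ j ≤ d ∧ a j ^ 2 + b j ^ 2 ≠ 0} :=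
    hr ▸ Nat.sInf_mem ⟨m, hmS⟩
  have hrm : r ≤ m := hr ▸ Nat.sInf_le hmS
  refine ncard_inter_genPset_le_of_eps_ne hr1 hrm (by omega) (hε' m hmI) (hε'' m hmI) hεm
    (fun i hi => ?_) (fun i hi => ?_) ((hvan r hr1 hrd).not.mp habr)
    ((hvan m hm1 (by omega)).not.mp habm)
  · obtain ⟨hi1, hir⟩ := mem_Ico.mp hi
    refine (hvan i hi1 (by omega)).mp (not_not.mp fun h => ?_)
    have hiS := Nat.notMem_of_lt_sInf (hr ▸ hir)
    exact hiS ⟨hi1, by omega, h⟩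
  · obtain ⟨hri, him⟩ := mem_Ico.mp hi
    refine or_iff_not_imp_left.mpr fun hε => (hvan i (by omega) (by omega)).mp ?_
    have hiZ := Nat.find_min hZ him
    exact not_not.mp fun h => hiZ ⟨mem_Icc.mpr ⟨by omega, by omega⟩, hε, h⟩

/-- For `ε', ε'' ∈ {0,1}^{d-1}` with `ε' ≠ ε''` and `a, b ∈ ℤ_p^d`: if the set
`Z = {j : 1 ≤ j ≤ d-1, ε'_j ≠ ε''_j and a_j² + b_j² ≠ 0}` is nonempty and the generalized
`p`-sets `P^{a,ε'}_{d,p}` and `P^{b,ε''}_{d,p}` are different, then their intersection has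
cardinality at most `r + 1`, where `r = min{j : 1 ≤ j ≤ d, a_j² + b_j² ≠ 0}`. -/
theorem gen_pset_inter_card_of_Z_nonempty (p d : ℕ) (hp : p.Prime) (hd : 2 ≤ d)
    (ε' ε'' : ℕ → ℤ)
    (hε' : ∀ i ∈ Finset.Icc 1 (d - 1), ε' i = 0 ∨ ε' i = 1)
    (hε'' : ∀ i ∈ Finset.Icc 1 (d - 1), ε'' i = 0 ∨ ε'' i = 1)
    (hεne : ∃ j ∈ Finset.Icc 1 (d - 1), ε' j ≠ ε'' j) (a b : ℕ → ℤ)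
    (ha : ∀ i ∈ Finset.Icc 1 d, 0 ≤ a i ∧ a i ≤ (p : ℤ) - 1)
    (hb : ∀ i ∈ Finset.Icc 1 d, 0 ≤ b i ∧ b i ≤ (p : ℤ) - 1)
    (hZ : ∃ j ∈ Finset.Icc 1 (d - 1), ε' j ≠ ε'' j ∧ (a j) ^ 2 + (b j) ^ 2 ≠ 0)
    (hne : genPset p d a ε' ≠ genPset p d b ε'') (r : ℕ)
    (hr : r = sInf {j : ℕ | 1 ≤ j ∧ j ≤ d ∧ (a j) ^ 2 + (b j) ^ 2 ≠ 0}) :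
    (genPset p d a ε' ∩ genPset p d b ε'').ncard ≤ r + 1 :=
  gen_pset_inter_card_of_Z_nonempty_general p d hp ε' ε'' hε' hε'' a b ha hb hZ r hr
end

section
/- Let p be a prime, d ≥ 1 an integer, a ∈ ℤ^d with 1 ≤ a_i ≤ p-1 for all i, and ε ∈ {0,1}^{d-1}. Then for every k ∈ ℤ^d with k ≠ 0 and |k_i| ≤ p-1 for all i, one has |Σ_{j=0}^{p-1} Σ_{k'=0}^{p-1} exp(2πi k·z_{j,k'}^{a,ε})| ≤ (d-1)p. -/
/-!
Write the `i`-th coordinate of `z_{j,k'}` as the fractional part of `f_i(j) k' / p`, where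
`f_i ∈ ℤ[X]` has degree `i - 1` and coefficient `a_i` in degree `i - 1`. Then `k · z_{j,k'}` is
congruent modulo `1` to `P(j) k' / p` with `P = ∑ k_i f_i`, and the sum over `k'` is a complete
additive character sum: it equals `p` if `P(j) ≡ 0 (mod p)` and `0` otherwise. Hence the whole sum
is `p` times the number of roots of `P` modulo `p`. If `i₀` is the last index with `k_{i₀} ≠ 0`,
the coefficient of `P` in degree `i₀ - 1` is `k_{i₀} a_{i₀}`, which is prime to `p` since
`0 < |k_{i₀}|, a_{i₀} < p`; so `P mod p` is a nonzero polynomial of degree `< d` and has at most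
`d - 1` roots.
-/

/-- The `i`-th coordinate (for `i = 1,…,d`) of the point `z_{j,k'}^{a,ε}` of the set
`R^{a,ε}_{p²,d}` (with `a'_h = ε_h * a_h`), namely the fractional part of
`((∑_{h=1}^{i-1} a'_h j^{h-1} + a_i j^{i-1}) k') / p`. -/
noncomputable def rCoord (p : ℕ) (a ε : ℕ → ℤ) (j k' i : ℕ) : ℝ :=
  Int.fract (((((∑ h ∈ Finset.Ico 1 i, ε h * a h * (j : ℤ) ^ (h - 1)) +
      a i * (j : ℤ) ^ (i - 1)) * (k' : ℤ) : ℤ) : ℝ) / (p : ℝ))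

open Polynomial Finset

section
variable {R : Type*} [Semiring R] {d : ℕ}

theorem Polynomial.coeff_sum_smul_of_natDegree_le (c : Fin d → R) (Q : Fin d → R[X])
    (hQ : ∀ i, (Q i).natDegree ≤ i) {i₀ : Fin d} (hc : ∀ i, i₀ < i → c i = 0) :
    (∑ i, c i • Q i).coeff i₀ = c i₀ * (Q i₀).coeff i₀ := by
  rw [finsetSum_coeff, Finset.sum_eq_single i₀ (fun i _ hi => ?_) (by simp), coeff_smul,
    smul_eq_mul]
  rcases hi.lt_or_gt with hlt | hgt
  · rw [coeff_smul, coeff_eq_zero_of_natDegree_lt ((hQ i).trans_lt hlt), smul_zero]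
  · rw [hc i hgt, zero_smul, coeff_zero]

theorem Polynomial.degree_sum_smul_lt (c : Fin d → R) (Q : Fin d → R[X])
    (hQ : ∀ i, (Q i).natDegree ≤ i) : (∑ i, c i • Q i).degree < d :=
  mem_degreeLT.1 <| Submodule.sum_mem _ fun i _ => Submodule.smul_mem _ _ <| mem_degreeLT.2 <|
    (degree_le_natDegree.trans (WithBot.coe_le_coe.2 (hQ i))).trans_lt
      (WithBot.coe_lt_coe.2 i.2)
end

theorem Fin.exists_ne_zero_forall_gt_eq_zero {M : Type*} [Zero M] {d : ℕ} {c : Fin d → M}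
    (hc : c ≠ 0) : ∃ i₀, c i₀ ≠ 0 ∧ ∀ i, i₀ < i → c i = 0 := by
  classical
  obtain ⟨i, hi⟩ := Function.ne_iff.1 hc
  obtain ⟨i₀, hi₀, hmax⟩ := Finset.exists_max_image {i | c i ≠ 0} id ⟨i, by simpa using hi⟩
  refine ⟨i₀, by simpa using hi₀, fun i hlt => ?_⟩
  by_contra h
  exact (hmax i (by simpa using h)).not_gt hlt

theorem ZMod.sum_range_natCast {M : Type*} [AddCommMonoid M] (n : ℕ) [NeZero n]
    (f : ZMod n → M) : ∑ j ∈ range n, f j = ∑ x, f x :=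
  Finset.sum_nbij' Nat.cast ZMod.val (by simp) (by simp [ZMod.val_lt])
    (fun j hj => ZMod.val_cast_of_lt (mem_range.1 hj)) (by simp) (by simp)

theorem ZMod.intCast_ne_zero_of_abs_lt {n : ℕ} {m : ℤ} (hm : m ≠ 0) (hmn : |m| < n) :
    (m : ZMod n) ≠ 0 := by
  rw [Ne, ZMod.intCast_zmod_eq_zero_iff_dvd]
  exact fun h => hm (Int.eq_zero_of_abs_lt_dvd h hmn)

open Complex Real in
theorem exp_two_pi_I_mul_sum_mul_fract_div {ι : Type*} (s : Finset ι) (N : ℕ) [NeZero N]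
    (k n : ι → ℤ) :
    exp (2 * π * I * ((∑ i ∈ s, (k i : ℝ) * Int.fract ((n i : ℝ) / N) : ℝ) : ℂ)) =
      ZMod.stdAddChar ((∑ i ∈ s, k i * n i : ℤ) : ZMod N) := by
  set m : ℤ := ∑ i ∈ s, k i * ⌊(n i : ℝ) / N⌋
  have hsplit : 2 * π * I * ((∑ i ∈ s, (k i : ℝ) * Int.fract ((n i : ℝ) / N) : ℝ) : ℂ) =
      2 * π * I * ((∑ i ∈ s, k i * n i : ℤ) : ℂ) / N - m * (2 * π * I) := by
    simp only [m, Int.fract, mul_sub, sum_sub_distrib]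
    push_cast
    rw [mul_div_assoc, sum_div]
    simp only [mul_div_assoc]
    ring
  rw [hsplit, exp_periodic.sub_int_mul_eq, ZMod.stdAddChar_apply, ZMod.toCircle_intCast]

noncomputable def rPoly (a ε : ℕ → ℤ) (i : ℕ) : ℤ[X] :=
  ∑ h ∈ Ico 1 i, C (ε h * a h) * X ^ (h - 1) + C (a i) * X ^ (i - 1)

section rPoly
variable (a ε : ℕ → ℤ)

theorem rCoord_eq_fract_eval (p j k' i : ℕ) :
    rCoord p a ε j k' i = Int.fract ((((rPoly a ε i).eval (j : ℤ) * k' : ℤ) : ℝ) / p) := by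
  simp [rCoord, rPoly, eval_finsetSum]

theorem natDegree_rPoly_succ_le (i : ℕ) : (rPoly a ε (i + 1)).natDegree ≤ i := by
  refine natDegree_add_le_of_degree_le (natDegree_sum_le_of_forall_le _ _ fun h hh => ?_) ?_
  · exact natDegree_C_mul_X_pow_le _ _ |>.trans (by simp at hh; omega)
  · exact natDegree_C_mul_X_pow_le _ _

theorem coeff_rPoly_succ (i : ℕ) : (rPoly a ε (i + 1)).coeff i = a (i + 1) := by
  rw [rPoly, coeff_add, finsetSum_coeff, Finset.sum_eq_zero fun h hh => ?_]
  · simp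
  · rw [coeff_C_mul_X_pow, if_neg (by simp at hh; omega)]

end rPoly

noncomputable def phasePoly {d : ℕ} (k : Fin d → ℤ) (a ε : ℕ → ℤ) : ℤ[X] :=
  ∑ i, k i • rPoly a ε (i + 1)

theorem phasePoly_map_ne_zero {p d : ℕ} [Fact p.Prime] {a ε : ℕ → ℤ}
    (ha : ∀ i ∈ Icc 1 d, 1 ≤ a i ∧ a i ≤ (p : ℤ) - 1) {k : Fin d → ℤ} (hk : k ≠ 0)
    (hkb : ∀ i, |k i| ≤ (p : ℤ) - 1) :
    (phasePoly k a ε).map (Int.castRingHom (ZMod p)) ≠ 0 := by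
  obtain ⟨i₀, hki₀, hmax⟩ := Fin.exists_ne_zero_forall_gt_eq_zero hk
  have hcoeff : (phasePoly k a ε).coeff i₀ = k i₀ * a (i₀ + 1) := by
    rw [phasePoly, coeff_sum_smul_of_natDegree_le k _ (fun i => natDegree_rPoly_succ_le a ε i)
      hmax, coeff_rPoly_succ]
  have ha₀ := ha (i₀ + 1) (by simp)
  intro h0
  have := congrArg (coeff · i₀) h0
  simp only [coeff_map, hcoeff, eq_intCast, Int.cast_mul, coeff_zero] at this
  exact mul_ne_zero (ZMod.intCast_ne_zero_of_abs_lt hki₀ (by linarith [hkb i₀]))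
    (ZMod.intCast_ne_zero_of_abs_lt (by omega) (by rw [abs_of_pos (by omega)]; omega)) this

theorem exp_sum_R_set_general (p d : ℕ) (hp : p.Prime) (a ε : ℕ → ℤ)
    (ha : ∀ i ∈ Finset.Icc 1 d, 1 ≤ a i ∧ a i ≤ (p : ℤ) - 1)
    (k : Fin d → ℤ) (hk : k ≠ 0) (hkb : ∀ i, |k i| ≤ (p : ℤ) - 1) :
    ‖∑ j ∈ Finset.range p, ∑ k' ∈ Finset.range p,
        Complex.exp (2 * Real.pi * Complex.I *
          ((∑ i : Fin d, (k i : ℝ) * rCoord p a ε j k' (i.1 + 1) : ℝ) : ℂ))‖ ≤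
      ((d : ℝ) - 1) * p := by
  have := Fact.mk hp
  set P := (phasePoly k a ε).map (Int.castRingHom (ZMod p))
  have hterm (j k' : ℕ) : Complex.exp (2 * Real.pi * Complex.I *
      ((∑ i : Fin d, (k i : ℝ) * rCoord p a ε j k' (i.1 + 1) : ℝ) : ℂ)) =
      ZMod.stdAddChar ((k' : ZMod p) * P.eval (j : ZMod p)) := by
    simp only [rCoord_eq_fract_eval, exp_two_pi_I_mul_sum_mul_fract_div]
    rw [eval_natCast_map, phasePoly, eval_finsetSum]
    simp only [eval_smul, smul_eq_mul, eq_intCast]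
    push_cast
    rw [mul_sum]
    exact congrArg _ (sum_congr rfl fun i _ => by ring)
  have hP : P ≠ 0 := phasePoly_map_ne_zero ha hk hkb
  have hdeg : P.natDegree < d := (natDegree_lt_iff_degree_lt hP).2 <|
    degree_map_le.trans_lt <| degree_sum_smul_lt k _ fun i => natDegree_rPoly_succ_le a ε i
  have hroots : #{x | P.eval x = 0} < d :=
    (card_le_degree_of_subset_roots fun x hx => by simpa [mem_roots hP] using hx).trans_lt hdeg
  calc _ = ‖∑ x : ZMod p, ∑ y : ZMod p, ZMod.stdAddChar (y * P.eval x)‖ := by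
        simp only [← ZMod.sum_range_natCast, hterm]
    _ = #{x | P.eval x = 0} * p := by
        simp only [AddChar.sum_mulShift _ (ZMod.isPrimitive_stdAddChar p), ZMod.card]
        simp [sum_ite]
    _ ≤ ((d : ℝ) - 1) * p := by
        gcongr
        exact le_sub_iff_add_le.2 (by exact_mod_cast hroots)

/-- **Exponential sum bound over** `R^{a,ε}_{p²,d}`, the generalization of the classical
set `{({k'/p},{jk'/p},…,{j^{d-1}k'/p}) : j,k' = 0,…,p-1}`: for every nonzero `k ∈ ℤ^d`
with `|k_i| ≤ p-1`, one has `|∑_{j=0}^{p-1} ∑_{k'=0}^{p-1} exp(2πi k·z_{j,k'}^{a,ε})| ≤ (d-1)p`. -/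
theorem exp_sum_R_set (p d : ℕ) (hp : p.Prime) (hd : 1 ≤ d) (a ε : ℕ → ℤ)
    (ha : ∀ i ∈ Finset.Icc 1 d, 1 ≤ a i ∧ a i ≤ (p : ℤ) - 1)
    (hε : ∀ i ∈ Finset.Icc 1 (d - 1), ε i = 0 ∨ ε i = 1)
    (k : Fin d → ℤ) (hk : k ≠ 0) (hkb : ∀ i, |k i| ≤ (p : ℤ) - 1) :
    ‖∑ j ∈ Finset.range p, ∑ k' ∈ Finset.range p,
        Complex.exp (2 * Real.pi * Complex.I *
          ((∑ i : Fin d, (k i : ℝ) * rCoord p a ε j k' (i.1 + 1) : ℝ) : ℂ))‖ ≤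
      ((d : ℝ) - 1) * p :=
  exp_sum_R_set_general p d hp a ε ha k hk hkb
end
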